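/- arXiv:2112.08124 — 6 statements merged into one kernel-verified Lean document; each statement's English description precedes it below -/
import Mathlib

section
/- Let n be even and P_1,…,P_n ∈ ℝ² be a closed n-gon such that the odd-indexed vertices lie on one line through the origin and the even-indexed vertices lie on another line through the origin (the two lines being distinct). Then the side areas s_{2i+1} = [P_i,P_{i+1}] satisfy s_1·s_5·s_9⋯ = ± s_3·s_7·s_{11}⋯, i.e., the product of side areas with indices ≡ 1 mod 4 equals plus or minus the product of those with indices ≡ 3 mod 4. -/
/-- The 2×2 determinant of two vectors in ℝ². -/
noncomputable def det2 (A B : ℝ × ℝ) : ℝ := A.1 * B.2 - A.2 * B.1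

/-- for a closed `n`-gon with `n` even whose odd-indexed vertices lie on one
coordinate axis through the origin and even-indexed vertices on the other, the product of the
side areas with indices `≡ 1 (mod 4)` (namely `s_1 s_5 s_9 ⋯ = ∏ [P_{2j}, P_{2j+1}]`) equals
plus or minus the product of the side areas with indices `≡ 3 (mod 4)`
(namely `s_3 s_7 s_11 ⋯ = ∏ [P_{2j+1}, P_{2j+2}]`). Here `P` is indexed by `ℕ` with period
`n`, `s_{2j-1} = [P_{j-1}, P_j]`, and the odd-indexed vertices satisfy `P i = (x_i, 0)`,
the even-indexed ones `P i = (0, y_i)`. -/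
theorem stmt_3 (n : ℕ) (hn : Even n) (hpos : 0 < n) (P : ℕ → ℝ × ℝ)
    (hper : ∀ i, P (i + n) = P i)
    (hodd : ∀ i, Odd i → (P i).2 = 0)
    (heven : ∀ i, Even i → (P i).1 = 0) :
    (∏ j ∈ Finset.range (n / 2), det2 (P (2 * j)) (P (2 * j + 1)))
      = ∏ j ∈ Finset.range (n / 2), det2 (P (2 * j + 1)) (P (2 * j + 2))
    ∨ (∏ j ∈ Finset.range (n / 2), det2 (P (2 * j)) (P (2 * j + 1)))
      = - ∏ j ∈ Finset.range (n / 2), det2 (P (2 * j + 1)) (P (2 * j + 2)) := by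
  obtain ⟨m, hm⟩ := hn
  have hm2 : n = 2 * m := by omega
  have hmn : n / 2 = m := by omega
  have hm1 : 1 ≤ m := by omega
  subst hm2
  rw [hmn]
  set f : ℕ → ℝ := fun j => (P (2 * j)).2 with hf
  set g : ℕ → ℝ := fun j => (P (2 * j + 1)).1 with hg
  have hA : ∀ j, det2 (P (2 * j)) (P (2 * j + 1)) = -(f j * g j) := by
    intro j
    have h1 := heven (2 * j) ⟨j, by ring⟩
    have h2 := hodd (2 * j + 1) ⟨j, by ring⟩
    simp [det2, h1, h2, hf, hg]
  have hB : ∀ j, det2 (P (2 * j + 1)) (P (2 * j + 2)) = g j * f (j + 1) := by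
    intro j
    have h1 := heven (2 * j + 2) ⟨j + 1, by ring⟩
    have h2 := hodd (2 * j + 1) ⟨j, by ring⟩
    have : 2 * j + 2 = 2 * (j + 1) := by ring
    simp [det2, h1, h2, hf, hg, this]
  -- shift lemma : ∏ f (j+1) = ∏ f j over range m
  have hfm : f m = f 0 := by
    have h := congrArg Prod.snd (hper 0)
    simpa [hf] using h
  have hshift : (∏ j ∈ Finset.range m, f (j + 1)) = ∏ j ∈ Finset.range m, f j := by
    obtain ⟨k, hk⟩ : ∃ k, m = k + 1 := ⟨m - 1, by omega⟩
    subst hk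
    rw [Finset.prod_range_succ, Finset.prod_range_succ' f, hfm]
  have key : (∏ j ∈ Finset.range m, det2 (P (2 * j)) (P (2 * j + 1)))
      = (-1 : ℝ) ^ m * ∏ j ∈ Finset.range m, det2 (P (2 * j + 1)) (P (2 * j + 2)) := by
    calc (∏ j ∈ Finset.range m, det2 (P (2 * j)) (P (2 * j + 1)))
        = ∏ j ∈ Finset.range m, (-1 : ℝ) * (f j * g j) := by
          refine Finset.prod_congr rfl fun j _ => ?_
          rw [hA j]; ring
      _ = (-1 : ℝ) ^ m * ((∏ j ∈ Finset.range m, f j) * ∏ j ∈ Finset.range m, g j) := by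
          rw [Finset.prod_mul_distrib, Finset.prod_mul_distrib, Finset.prod_const,
            Finset.card_range]
      _ = (-1 : ℝ) ^ m * ((∏ j ∈ Finset.range m, g j) * ∏ j ∈ Finset.range m, f (j + 1)) := by
          rw [hshift]; ring
      _ = (-1 : ℝ) ^ m * ∏ j ∈ Finset.range m, det2 (P (2 * j + 1)) (P (2 * j + 2)) := by
          rw [← Finset.prod_mul_distrib]
          congr 1
          exact Finset.prod_congr rfl fun j _ => (hB j).symm
  rcases Nat.even_or_odd m with he | ho
  · left; rw [key, he.neg_one_pow, one_mul]
  · right; rw [key, ho.neg_one_pow, neg_one_mul]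
end

section
/- Let P_1, P_2, P_3 ∈ ℝ² with s_3 = [P_1,P_2] ≠ 0, s_5 = [P_2,P_3] ≠ 0, v_4 = [P_1,P_3], and fix c ≠ 0. Parameterize the line {Q : [P_i,Q]=c} by t ↦ c·P_{i+1}/[P_i,P_{i+1}] + t·P_i. Then the map sending Q_1 (with [P_1,Q_1]=c) to Q_2 defined by [Q_1,Q_2] = [P_1,P_2] and [P_2,Q_2] = c, given by Q_2 = R_{Q_1,P_2}(P_1), is expressed in these coordinates as the fractional-linear map t ↦ −c·v_4/(s_3·s_5) + (s_3² − c²)/(t·s_3²). -/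
/-- The centroaffine reflection `R_{Q,P}(X) = ([Q,X]·Q + [X,P]·P) / [Q,P]`. -/
noncomputable def careflect (Q P X : ℝ × ℝ) : ℝ × ℝ :=
  (det2 Q P)⁻¹ • (det2 Q X • Q + det2 X P • P)

/-- in the parametrization `Q₁ = (c/s₃) • P₂ + t • P₁` of the line
`{Q : [P₁,Q] = c}`, the map `Q₁ ↦ Q₂ = R_{Q₁,P₂}(P₁)` (which satisfies `[Q₁,Q₂] = [P₁,P₂]`
and `[P₂,Q₂] = c`) is the fractional-linear map
`t ↦ −c·v₄/(s₃·s₅) + (s₃² − c²)/(t·s₃²)`, i.e.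
`Q₂ = (c/s₅) • P₃ + t' • P₂` with `t'` given by this formula. -/
theorem stmt_8 (P₁ P₂ P₃ : ℝ × ℝ) (c t : ℝ) (hc : c ≠ 0) (ht : t ≠ 0)
    (s₃ s₅ v₄ : ℝ)
    (hs₃ : s₃ = det2 P₁ P₂) (hs₅ : s₅ = det2 P₂ P₃) (hv₄ : v₄ = det2 P₁ P₃)
    (hs₃ne : s₃ ≠ 0) (hs₅ne : s₅ ≠ 0) :
    careflect ((c / s₃) • P₂ + t • P₁) P₂ P₁
      = (c / s₅) • P₃ + (-(c * v₄) / (s₃ * s₅) + (s₃ ^ 2 - c ^ 2) / (t * s₃ ^ 2)) • P₂ := by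
  obtain ⟨a, b⟩ := P₁; obtain ⟨d, e⟩ := P₂; obtain ⟨f, g⟩ := P₃
  simp only [det2] at hs₃ hs₅ hv₄
  subst hs₃ hs₅ hv₄
  have hd : det2 ((c / (a*e - b*d)) • (d,e) + t • (a,b)) (d,e) = t * (a*e - b*d) := by
    simp only [det2, Prod.smul_mk, Prod.mk_add_mk, smul_eq_mul]; ring
  rw [careflect, hd]
  simp only [det2, Prod.smul_mk, Prod.mk_add_mk, Prod.mk.injEq, smul_eq_mul]
  constructor <;> field_simp <;> ring
end

section
/- Let P_1P_2Q_2Q_1 be a centroaffine butterfly, i.e., [P_1,P_2]=[Q_1,Q_2] and [P_1,Q_1]=[P_2,Q_2], with P_1=(1,0), P_2=(a,b), Q_2=(0,1), Q_1=(b,a) (b≠0, a²≠b²). Then for every point X=(x,y) with xy ≠ ab, the composition R_{X, P_2} followed by R_{R_{X,P_2}(P_1), Q_2} applied starting from P_1 produces the same point as the composition going through Q_1: the quadrilateral's Lax transformation is the identity for all values of the constant. Concretely: with X=(x,y), one has R_{X,P_2}(P_1) = (ab − xy, b² − y²)/(bx − ay) and the next reflection yields (−y, (−y(a²+b²) + abx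 + y³)/(ab − xy)), which is symmetric under (a,b) ↔ (b,a). -/
theorem careflect_eq (Q P X : ℝ × ℝ) :
    careflect Q P X = ((det2 Q X * Q.1 + det2 X P * P.1) / det2 Q P,
      (det2 Q X * Q.2 + det2 X P * P.2) / det2 Q P) := by
  ext <;> simp only [careflect, Prod.smul_fst, Prod.smul_snd, Prod.fst_add, Prod.snd_add,
    smul_eq_mul, div_eq_inv_mul]

theorem careflect_mk_one_zero (a b x y : ℝ) :
    careflect (x, y) (a, b) (1, 0)
      = ((a * b - x * y) / (b * x - a * y), (b ^ 2 - y ^ 2) / (b * x - a * y)) := by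
  have hdet : det2 (x, y) (a, b) = b * x - a * y := by simp only [det2]; ring
  rw [careflect_eq, hdet]
  simp only [det2]
  congr 1 <;> ring

theorem careflect_careflect_mk_one_zero {a b x y : ℝ} (hxy : x * y ≠ a * b)
    (hden : b * x - a * y ≠ 0) :
    careflect ((a * b - x * y) / (b * x - a * y), (b ^ 2 - y ^ 2) / (b * x - a * y)) (0, 1) (a, b)
      = (-y, (-y * (a ^ 2 + b ^ 2) + a * b * x + y ^ 3) / (a * b - x * y)) := by
  have hnum : a * b - x * y ≠ 0 := sub_ne_zero.mpr hxy.symm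
  have hdet : det2 ((a * b - x * y) / (b * x - a * y), (b ^ 2 - y ^ 2) / (b * x - a * y)) (0, 1)
      = (a * b - x * y) / (b * x - a * y) := by simp only [det2]; ring
  rw [careflect_eq, hdet]
  simp only [det2]
  congr 1 <;> field_simp <;> ring

theorem stmt_9_general (a b x y : ℝ)
    (hxy : x * y ≠ a * b) (hden : b * x - a * y ≠ 0) :
    careflect (x, y) (a, b) (1, 0)
        = ((a * b - x * y) / (b * x - a * y), (b ^ 2 - y ^ 2) / (b * x - a * y))
    ∧ careflect (careflect (x, y) (a, b) (1, 0)) (0, 1) (a, b)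
        = (-y, (-y * (a ^ 2 + b ^ 2) + a * b * x + y ^ 3) / (a * b - x * y))
    ∧ careflect (careflect (x, y) (a, b) (1, 0)) (0, 1) (a, b)
        = (-y, (-y * (b ^ 2 + a ^ 2) + b * a * x + y ^ 3) / (b * a - x * y)) := by
  have hsecond := careflect_careflect_mk_one_zero hxy hden
  rw [careflect_mk_one_zero]
  refine ⟨rfl, hsecond, ?_⟩
  rw [hsecond, add_comm (a ^ 2), mul_comm a b]

/-- for the centroaffine butterfly `P₁ = (1,0)`, `P₂ = (a,b)`, `Q₂ = (0,1)`,
`Q₁ = (b,a)`, and any starting point `X = (x,y)`, one has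
`R_{X,P₂}(P₁) = (ab − xy, b² − y²)/(bx − ay)`, and the second reflection yields
`(−y, (−y(a²+b²) + abx + y³)/(ab − xy))`, an expression symmetric under `(a,b) ↔ (b,a)`;
hence the Lax transformation of the butterfly is the identity for all values of the
constant. -/
theorem stmt_9 (a b x y : ℝ) (hb : b ≠ 0) (hab : a ^ 2 ≠ b ^ 2)
    (hxy : x * y ≠ a * b) (hden : b * x - a * y ≠ 0) :
    careflect (x, y) (a, b) (1, 0)
        = ((a * b - x * y) / (b * x - a * y), (b ^ 2 - y ^ 2) / (b * x - a * y))
    ∧ careflect (careflect (x, y) (a, b) (1, 0)) (0, 1) (a, b)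
        = (-y, (-y * (a ^ 2 + b ^ 2) + a * b * x + y ^ 3) / (a * b - x * y))
    ∧ careflect (careflect (x, y) (a, b) (1, 0)) (0, 1) (a, b)
        = (-y, (-y * (b ^ 2 + a ^ 2) + b * a * x + y ^ 3) / (b * a - x * y)) :=
  stmt_9_general a b x y hxy hden
end

section
/- Let n be odd and let (P_i) be a twisted n-gon with s_{2i+1} = [P_i,P_{i+1}] ≠ 0 and v_{2i} = [P_{i-1},P_{i+1}] (n-periodic). Then the system [P_i, ξ_i] = 1 and [P_i, ξ_{i+1}] + [ξ_i, P_{i+1}] = 0 (for all i mod n) has a unique solution of the form ξ_i = a_i P_i + b_i P_{i+1}, given by a_i = (1/2)·Σ_{k=1}^{n} (−1)^k · v_{2i+2k}/(s_{2i+2k−1}·s_{2i+2k+1}) and b_i = 1/s_{2i+1}. -/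
/-- Candidate solution for the alternating recurrence `a i + a (i+1) = c (i+1)`. -/
noncomputable def altA (n : ℕ) (c : ℤ → ℝ) (i : ℤ) : ℝ :=
  (1 / 2) * ∑ k ∈ Finset.Icc 1 n, (-1 : ℝ) ^ (k + 1) * c (i + k)

lemma altA_rec (n : ℕ) (hn : Odd n) (c : ℤ → ℝ) (hcp : ∀ i, c (i + n) = c i) (i : ℤ) :
    altA n c i + altA n c (i + 1) = c (i + 1) := by
  set u : ℕ → ℝ := fun k => (-1 : ℝ) ^ k * c (i + 1 + k) with hu
  have e1 : ∑ k ∈ Finset.Icc 1 n, (-1 : ℝ) ^ (k + 1) * c (i + k)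
      = ∑ k ∈ Finset.range n, u k := by
    rw [← Finset.Ico_add_one_right_eq_Icc, Finset.sum_Ico_eq_sum_range]
    refine Finset.sum_congr rfl fun k _ => ?_
    simp only [hu]
    have : i + ((1 + k : ℕ) : ℤ) = i + 1 + (k : ℤ) := by push_cast; ring
    rw [this]
    ring
  have e2 : ∑ k ∈ Finset.Icc 1 n, (-1 : ℝ) ^ (k + 1) * c (i + 1 + k)
      = ∑ k ∈ Finset.range n, (-(u (k + 1))) := by
    rw [← Finset.Ico_add_one_right_eq_Icc, Finset.sum_Ico_eq_sum_range]
    refine Finset.sum_congr rfl fun k _ => ?_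
    simp only [hu]
    have : i + 1 + ((1 + k : ℕ) : ℤ) = i + 1 + ((k + 1 : ℕ) : ℤ) := by push_cast; ring
    rw [this]
    ring
  unfold altA
  rw [e1, e2, ← mul_add, ← Finset.sum_add_distrib]
  have hsub : ∀ k ∈ Finset.range n, u k + -(u (k + 1)) = u k - u (k + 1) := by
    intro k _; ring
  rw [Finset.sum_congr rfl hsub, Finset.sum_range_sub' u n]
  have hu0 : u 0 = c (i + 1) := by simp [hu]
  have hun : u n = -c (i + 1) := by
    simp only [hu]
    rw [hcp (i + 1), hn.neg_one_pow]
    ring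
  rw [hu0, hun]
  ring

lemma altA_unique (n : ℕ) (hn : Odd n) (c a : ℤ → ℝ)
    (hcp : ∀ i, c (i + n) = c i) (hap : ∀ i, a (i + n) = a i) :
    (∀ i, a i + a (i + 1) = c (i + 1)) ↔ ∀ i, a i = altA n c i := by
  constructor
  · intro h i
    have hAp : ∀ j, altA n c (j + n) = altA n c j := by
      intro j; unfold altA; congr 1
      refine Finset.sum_congr rfl fun k _ => ?_
      congr 1
      rw [show j + (n : ℤ) + k = (j + k) + n by ring, hcp]
    set d : ℤ → ℝ := fun j => a j - altA n c j with hd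
    have hstep : ∀ j, d (j + 1) = -d j := by
      intro j
      have h1 := h j
      have h2 := altA_rec n hn c hcp j
      simp only [hd]
      linarith
    have hiter : ∀ (m : ℕ) (j : ℤ), d (j + m) = (-1 : ℝ) ^ m * d j := by
      intro m
      induction m with
      | zero => intro j; simp
      | succ m ih =>
        intro j
        have : j + ((m + 1 : ℕ) : ℤ) = (j + m) + 1 := by push_cast; ring
        rw [this, hstep, ih, pow_succ]
        ring
    have h1 : d (i + n) = d i := by simp only [hd]; rw [hap, hAp]
    have h2 := hiter n i
    rw [hn.neg_one_pow, h1] at h2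
    have h3 : d i = 0 := by linarith
    simp only [hd] at h3
    linarith
  · intro h i
    rw [h i, h (i + 1)]
    exact altA_rec n hn c hcp i

/-- for a twisted `n`-gon (`n` odd) with monodromy a determinant-preserving
linear map `g`, nonzero side areas `S i = [P_i, P_{i+1}]` (`= s_{2i+1}`) and diagonal areas
`V i = [P_{i-1}, P_{i+1}]` (`= v_{2i}`), the system `[P_i, ξ_i] = 1`,
`[P_i, ξ_{i+1}] + [ξ_i, P_{i+1}] = 0` with `ξ_i = a_i • P_i + b_i • P_{i+1}`
(`a`, `b` being `n`-periodic) has a unique solution, namely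
`a_i = (1/2) ∑_{k=1}^{n} (−1)^k v_{2i+2k}/(s_{2i+2k−1} s_{2i+2k+1})` and
`b_i = 1/s_{2i+1}`. -/
theorem stmt_11 (n : ℕ) (hn : Odd n) (hpos : 0 < n)
    (P : ℤ → ℝ × ℝ) (g : (ℝ × ℝ) →ₗ[ℝ] ℝ × ℝ)
    (hg : ∀ X Y, det2 (g X) (g Y) = det2 X Y)
    (hP : ∀ i, P (i + n) = g (P i))
    (S V : ℤ → ℝ)
    (hS : ∀ i, S i = det2 (P i) (P (i + 1)))
    (hV : ∀ i, V i = det2 (P (i - 1)) (P (i + 1)))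
    (hSne : ∀ i, S i ≠ 0)
    (a b : ℤ → ℝ) (hap : ∀ i, a (i + n) = a i) (hbp : ∀ i, b (i + n) = b i) :
    (∀ i : ℤ, det2 (P i) (a i • P i + b i • P (i + 1)) = 1
        ∧ det2 (P i) (a (i + 1) • P (i + 1) + b (i + 1) • P (i + 2))
          + det2 (a i • P i + b i • P (i + 1)) (P (i + 1)) = 0)
      ↔ (∀ i : ℤ,
          a i = (1 / 2) * ∑ k ∈ Finset.Icc 1 n,
              (-1 : ℝ) ^ k * V (i + k) / (S (i + k - 1) * S (i + k))
          ∧ b i = 1 / S i) := by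
  have hSp : ∀ i, S (i + n) = S i := by
    intro i
    rw [hS, hS, show i + (n : ℤ) + 1 = (i + 1) + n by ring, hP, hP, hg]
  have hVp : ∀ i, V (i + n) = V i := by
    intro i
    rw [hV, hV, show i + (n : ℤ) - 1 = (i - 1) + n by ring,
      show i + (n : ℤ) + 1 = (i + 1) + n by ring, hP, hP, hg]
  set c : ℤ → ℝ := fun j => -(V j / (S (j - 1) * S j)) with hc
  have hcp : ∀ i, c (i + n) = c i := by
    intro i
    simp only [hc]
    rw [show i + (n : ℤ) - 1 = (i - 1) + n by ring, hSp, hSp, hVp]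
  have hAeq : ∀ i, altA n c i = (1 / 2) * ∑ k ∈ Finset.Icc 1 n,
      (-1 : ℝ) ^ k * V (i + k) / (S (i + k - 1) * S (i + k)) := by
    intro i
    unfold altA
    congr 1
    refine Finset.sum_congr rfl fun k _ => ?_
    simp only [hc]
    rw [pow_succ]
    ring
  have e1 : ∀ i, det2 (P i) (a i • P i + b i • P (i + 1)) = b i * S i := by
    intro i
    rw [hS]
    simp only [det2, Prod.fst_add, Prod.snd_add, Prod.smul_fst, Prod.smul_snd, smul_eq_mul]
    ring
  have e2 : ∀ i, det2 (P i) (a (i + 1) • P (i + 1) + b (i + 1) • P (i + 2))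
      + det2 (a i • P i + b i • P (i + 1)) (P (i + 1))
      = (a i + a (i + 1)) * S i + b (i + 1) * V (i + 1) := by
    intro i
    rw [hS, hV, show i + 1 - 1 = i by ring, show i + 1 + 1 = i + 2 by ring]
    simp only [det2, Prod.fst_add, Prod.snd_add, Prod.smul_fst, Prod.smul_snd, smul_eq_mul]
    ring
  constructor
  · intro H
    have hb : ∀ i, b i = 1 / S i := by
      intro i
      have h1 := (H i).1
      rw [e1] at h1
      rw [eq_div_iff (hSne i)]
      exact h1
    have hrec : ∀ i, a i + a (i + 1) = c (i + 1) := by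
      intro i
      have h2 := (H i).2
      rw [e2, hb (i + 1)] at h2
      simp only [hc]
      rw [show i + 1 - 1 = i by ring]
      have hs0 := hSne i
      have hs1 := hSne (i + 1)
      field_simp at h2 ⊢
      linarith
    have ha := (altA_unique n hn c a hcp hap).mp hrec
    intro i
    exact ⟨by rw [ha i, hAeq i], hb i⟩
  · intro H i
    have hb : ∀ j, b j = 1 / S j := fun j => (H j).2
    have ha : ∀ j, a j = altA n c j := by
      intro j
      rw [hAeq j]
      exact (H j).1
    have hrec := (altA_unique n hn c a hcp hap).mpr ha
    constructor
    · rw [e1, hb i]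
      rw [one_div, inv_mul_cancel₀ (hSne i)]
    · rw [e2, hb (i + 1)]
      have h3 := hrec i
      simp only [hc] at h3
      rw [show i + 1 - 1 = i by ring] at h3
      have hs0 := hSne i
      have hs1 := hSne (i + 1)
      field_simp at h3 ⊢
      linarith
end

section
/- If P and Q are c-related n-gons (with [P_i,Q_i] = c and [P_i,P_{i+1}] = [Q_i,Q_{i+1}] = s_{2i+1} for all i, indices mod n), then Σ_i s_{2i+1}·x_i·x_{i+1} = Σ_i s_{2i+1}·u_i·u_{i+1}, where P_i = (x_i,y_i) and Q_i = (u_i,v_i); that is, the function I is an integral of the c-relation. (Key identity: c·(x_i u_i − x_{i+1}u_{i+1}) + s_{2i+1}·u_i u_{i+1} = s_{2i+1}·x_i x_{i+1} for each i, given x_i ≠ 0 for all i and c ≠ 0.) -/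
/-- if `P` and `Q` are `c`-related `n`-gons, with `P_i = (x_i, y_i)`,
`Q_i = (u_i, v_i)`, `x_i v_i − y_i u_i = c` and
`x_i y_{i+1} − y_i x_{i+1} = s_i = u_i v_{i+1} − v_i u_{i+1}`, all `x_i ≠ 0` and `c ≠ 0`,
then the key identity
`c (x_i u_i − x_{i+1} u_{i+1}) + s_i u_i u_{i+1} = s_i x_i x_{i+1}` holds for every `i`,
and consequently `I = ∑ s_i x_i x_{i+1}` is an integral of the `c`-relation:
`∑ s_i x_i x_{i+1} = ∑ s_i u_i u_{i+1}`. -/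
theorem stmt_16 (n : ℕ) [NeZero n] (c : ℝ) (hc : c ≠ 0)
    (x y u v s : ZMod n → ℝ)
    (hx : ∀ i, x i ≠ 0)
    (hrel : ∀ i, x i * v i - y i * u i = c)
    (hsP : ∀ i, x i * y (i + 1) - y i * x (i + 1) = s i)
    (hsQ : ∀ i, u i * v (i + 1) - v i * u (i + 1) = s i) :
    (∀ i, c * (x i * u i - x (i + 1) * u (i + 1)) + s i * (u i * u (i + 1))
        = s i * (x i * x (i + 1)))
    ∧ ∑ i : ZMod n, s i * (x i * x (i + 1)) = ∑ i : ZMod n, s i * (u i * u (i + 1)) := by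
  have key : ∀ i, c * (x i * u i - x (i + 1) * u (i + 1)) + s i * (u i * u (i + 1))
      = s i * (x i * x (i + 1)) := by
    intro i
    linear_combination (x i * x (i + 1)) * hsQ i - (u i * u (i + 1)) * hsP i
      - (u i * x i) * hrel (i + 1) + (u (i + 1) * x (i + 1)) * hrel i
  refine ⟨key, ?_⟩
  have htel : ∑ i : ZMod n, (x i * u i - x (i + 1) * u (i + 1)) = 0 := by
    rw [Finset.sum_sub_distrib]
    rw [Fintype.sum_equiv (Equiv.addRight (1 : ZMod n)) (fun i => x (i + 1) * u (i + 1))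
      (fun i => x i * u i) (fun i => rfl)]
    ring
  calc ∑ i : ZMod n, s i * (x i * x (i + 1))
      = ∑ i : ZMod n, (c * (x i * u i - x (i + 1) * u (i + 1)) + s i * (u i * u (i + 1))) := by
        exact Finset.sum_congr rfl fun i _ => (key i).symm
    _ = c * ∑ i : ZMod n, (x i * u i - x (i + 1) * u (i + 1))
        + ∑ i : ZMod n, s i * (u i * u (i + 1)) := by
        rw [Finset.sum_add_distrib, Finset.mul_sum]
    _ = ∑ i : ZMod n, s i * (u i * u (i + 1)) := by rw [htel]; ring
end

section
/- Consider quadruples (s_1,s_3,s_5,s_7,v_2,v_4) with v_2 v_4 = s_1 s_5 − s_3 s_7 (Ptolemy–Plücker) and all quantities nonzero, including s_1 s_5 − s_3 s_7, s_1 s_3 − s_5 s_7, s_1 s_7 − s_3 s_5. Define the recutting map T(s_1,s_3,s_5,s_7,v_2,v_4) = (s_1,s_5,s_7,s_3, v_2·(s_1s_3−s_5s_7)/(s_1s_5−s_3s_7), v_4·(s_1s_7−s_3s_5)/(s_1s_3−s_5s_7)). Then the third iterate T³ returns the original data: T³(s_1,s_3,s_5,s_7,v_2,v_4) = (s_1,s_3,s_5,s_7,v_2,v_4),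 where at each step the s-entries are permuted as stated and the v-entries transform by the analogous formulas in the current s-entries. -/
/-!
The map fixes `s₁` and cycles `s₃ → s₅ → s₇`, and this cycle permutes the three cross differences
`A = s₁s₅ - s₃s₇`, `B = s₁s₃ - s₅s₇`, `C = s₁s₇ - s₃s₅` as `A ↦ C ↦ B ↦ A`. So after three steps
`v₂` has been multiplied by `(B/A)(A/C)(C/B) = 1` and `v₄` by `(C/B)(B/A)(A/C) = 1`, while
`v₂v₄` is multiplied by `C/A` at the first step, which turns the relation `v₂v₄ = A` into `v₂'v₄' = C`.
-/

/-- The quadrilateral recutting map on the coordinates `(s₁, s₃, s₅, s₇, v₂, v₄)`. -/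
noncomputable def recutMap : ℝ × ℝ × ℝ × ℝ × ℝ × ℝ → ℝ × ℝ × ℝ × ℝ × ℝ × ℝ :=
  fun p =>
    match p with
    | (s₁, s₃, s₅, s₇, v₂, v₄) =>
      (s₁, s₅, s₇, s₃,
        v₂ * (s₁ * s₃ - s₅ * s₇) / (s₁ * s₅ - s₃ * s₇),
        v₄ * (s₁ * s₇ - s₃ * s₅) / (s₁ * s₃ - s₅ * s₇))

/-- The Ptolemy–Plücker relation `v₂ v₄ = s₁ s₅ - s₃ s₇` on the data `(s₁, s₃, s₅, s₇, v₂, v₄)`. -/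
def IsPtolemy (p : ℝ × ℝ × ℝ × ℝ × ℝ × ℝ) : Prop :=
  p.2.2.2.2.1 * p.2.2.2.2.2 = p.1 * p.2.2.1 - p.2.1 * p.2.2.2.1

section

variable (s₁ s₃ s₅ s₇ v₂ v₄ : ℝ)

theorem recutMap_apply :
    recutMap (s₁, s₃, s₅, s₇, v₂, v₄) =
      (s₁, s₅, s₇, s₃,
        v₂ * (s₁ * s₃ - s₅ * s₇) / (s₁ * s₅ - s₃ * s₇),
        v₄ * (s₁ * s₇ - s₃ * s₅) / (s₁ * s₃ - s₅ * s₇)) :=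
  rfl

variable {s₁ s₃ s₅ s₇ v₂ v₄}

theorem IsPtolemy.recutMap (hPl : IsPtolemy (s₁, s₃, s₅, s₇, v₂, v₄))
    (hA : s₁ * s₅ - s₃ * s₇ ≠ 0) (hB : s₁ * s₃ - s₅ * s₇ ≠ 0) :
    IsPtolemy (recutMap (s₁, s₃, s₅, s₇, v₂, v₄)) := by
  unfold IsPtolemy at hPl ⊢
  rw [recutMap_apply]
  field_simp
  linear_combination (s₁ * s₇ - s₃ * s₅) * hPl

theorem recutMap_recutMap_recutMap (hA : s₁ * s₅ - s₃ * s₇ ≠ 0)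
    (hB : s₁ * s₃ - s₅ * s₇ ≠ 0) (hC : s₁ * s₇ - s₃ * s₅ ≠ 0) :
    recutMap (recutMap (recutMap (s₁, s₃, s₅, s₇, v₂, v₄))) = (s₁, s₃, s₅, s₇, v₂, v₄) := by
  have hA' : s₁ * s₅ - s₇ * s₃ ≠ 0 := by rwa [mul_comm s₇]
  have hC' : s₁ * s₇ - s₅ * s₃ ≠ 0 := by rwa [mul_comm s₅]
  have hB' : s₁ * s₃ - s₇ * s₅ ≠ 0 := by rwa [mul_comm s₇]
  simp only [recutMap_apply, Prod.mk.injEq, true_and]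
  constructor <;> field_simp

end

theorem stmt_19_general (s₁ s₃ s₅ s₇ v₂ v₄ : ℝ)
    (hPl : v₂ * v₄ = s₁ * s₅ - s₃ * s₇)
    (hA : s₁ * s₅ - s₃ * s₇ ≠ 0) (hB : s₁ * s₃ - s₅ * s₇ ≠ 0)
    (hC : s₁ * s₇ - s₃ * s₅ ≠ 0) :
    ((recutMap (s₁, s₃, s₅, s₇, v₂, v₄)).2.2.2.2.1
        * (recutMap (s₁, s₃, s₅, s₇, v₂, v₄)).2.2.2.2.2
      = (recutMap (s₁, s₃, s₅, s₇, v₂, v₄)).1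
          * (recutMap (s₁, s₃, s₅, s₇, v₂, v₄)).2.2.1
        - (recutMap (s₁, s₃, s₅, s₇, v₂, v₄)).2.1
            * (recutMap (s₁, s₃, s₅, s₇, v₂, v₄)).2.2.2.1)
    ∧ recutMap (recutMap (recutMap (s₁, s₃, s₅, s₇, v₂, v₄))) = (s₁, s₃, s₅, s₇, v₂, v₄) :=
  ⟨IsPtolemy.recutMap hPl hA hB, recutMap_recutMap_recutMap hA hB hC⟩

/-- the recutting map `T` preserves the Ptolemy–Plücker relation
`v₂ v₄ = s₁ s₅ − s₃ s₇`, and its third iterate is the identity on the data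
`(s₁, s₃, s₅, s₇, v₂, v₄)` (all quantities and intermediate denominators nonzero). -/
theorem stmt_19 (s₁ s₃ s₅ s₇ v₂ v₄ : ℝ)
    (h₁ : s₁ ≠ 0) (h₃ : s₃ ≠ 0) (h₅ : s₅ ≠ 0) (h₇ : s₇ ≠ 0)
    (hv₂ : v₂ ≠ 0) (hv₄ : v₄ ≠ 0)
    (hPl : v₂ * v₄ = s₁ * s₅ - s₃ * s₇)
    (hA : s₁ * s₅ - s₃ * s₇ ≠ 0) (hB : s₁ * s₃ - s₅ * s₇ ≠ 0)
    (hC : s₁ * s₇ - s₃ * s₅ ≠ 0) :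
    ((recutMap (s₁, s₃, s₅, s₇, v₂, v₄)).2.2.2.2.1
        * (recutMap (s₁, s₃, s₅, s₇, v₂, v₄)).2.2.2.2.2
      = (recutMap (s₁, s₃, s₅, s₇, v₂, v₄)).1
          * (recutMap (s₁, s₃, s₅, s₇, v₂, v₄)).2.2.1
        - (recutMap (s₁, s₃, s₅, s₇, v₂, v₄)).2.1
            * (recutMap (s₁, s₃, s₅, s₇, v₂, v₄)).2.2.2.1)
    ∧ recutMap (recutMap (recutMap (s₁, s₃, s₅, s₇, v₂, v₄))) = (s₁, s₃, s₅, s₇, v₂, v₄) :=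
  stmt_19_general s₁ s₃ s₅ s₇ v₂ v₄ hPl hA hB hC
end
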